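/- Let G : P2(ℝ^d) → (−∞,+∞] be proper, lower semicontinuous with respect to W2, and convex along generalized geodesics, with argmin G nonempty. Let {ε_n} ⊂ ℝ_{≥0} with ∑_n ε_n < ∞, let {τ_n} ⊂ ℝ_{>0} with ∑_i τ_i = ∞, and set σ_n = ∑_{i=0}^{n−1} τ_i. Let {μ_n} ⊂ P2(ℝ^d) satisfy W2(μ_{n+1}, J_{τ_n}(μ_n)) ≤ ε_n for all n, where J_τ(μ) is the unique minimizer of ν ↦ G(ν) + (1/(2τ)) W2²(ν, μ). Define the best-iterate sequence β̄_n = J_{τ_{j_n}}(μ_{j_n}) with j_n minimizing i ↦ G(J_{τ_i}(μ_i)) over i = 0,…,n−1. Then there exists C > 0 such that G(β̄_n) − inf G ≤ C/σ_n for all n ≥ 1, i.e. G(β̄_n) − inf G = O(1/σ_n). -/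

import Mathlib

open MeasureTheory Filter Topology ENNReal

noncomputable section

/-- Euclidean space ℝ^d. -/
abbrev Ed (d : ℕ) := EuclideanSpace ℝ (Fin d)

/-- `P2 d`: Borel probability measures on ℝ^d with finite second moment. -/
def P2 (d : ℕ) : Set (Measure (Ed d)) :=
  {μ | IsProbabilityMeasure μ ∧ ∫⁻ x, ENNReal.ofReal (‖x‖ ^ 2) ∂μ < ⊤}

/-- A coupling of `μ` and `ν`. -/
def IsCoupling {d : ℕ} (γ : Measure (Ed d × Ed d)) (μ ν : Measure (Ed d)) : Prop :=
  IsProbabilityMeasure γ ∧ γ.map Prod.fst = μ ∧ γ.map Prod.snd = ν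

/-- `p`-th power transport cost of a plan `γ`. -/
def Wcost {d : ℕ} (p : ℝ) (γ : Measure (Ed d × Ed d)) : ℝ≥0∞ :=
  ∫⁻ z, ENNReal.ofReal (‖z.1 - z.2‖ ^ p) ∂γ

/-- Minimal `p`-th power transport cost between `μ` and `ν`. -/
def minCost {d : ℕ} (p : ℝ) (μ ν : Measure (Ed d)) : ℝ≥0∞ :=
  ⨅ γ : {γ : Measure (Ed d × Ed d) // IsCoupling γ μ ν}, Wcost p γ.1

/-- The `p`-Wasserstein distance. -/
def Wp {d : ℕ} (p : ℝ) (μ ν : Measure (Ed d)) : ℝ :=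
  (minCost p μ ν ^ (1 / p)).toReal

/-- The 2-Wasserstein distance. -/
def W2 {d : ℕ} (μ ν : Measure (Ed d)) : ℝ := Wp 2 μ ν

/-- Optimal transport plan for the quadratic cost. -/
def IsOptimalPlan {d : ℕ} (γ : Measure (Ed d × Ed d)) (μ ν : Measure (Ed d)) : Prop :=
  IsCoupling γ μ ν ∧ Wcost 2 γ = minCost 2 μ ν

/-- `curve` is a generalized geodesic between `μ0` and `μ1` with base `base`. -/
def IsGenGeodesic {d : ℕ} (curve : ℝ → Measure (Ed d))
    (μ0 μ1 base : Measure (Ed d)) : Prop :=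
  ∃ γ : Measure (Ed d × Ed d × Ed d),
    IsProbabilityMeasure γ ∧
    IsOptimalPlan (γ.map (fun z => (z.1, z.2.1))) base μ0 ∧
    IsOptimalPlan (γ.map (fun z => (z.1, z.2.2))) base μ1 ∧
    ∀ t ∈ Set.Icc (0 : ℝ) 1,
      curve t = γ.map (fun z => (1 - t) • z.2.1 + t • z.2.2)

/-- Convexity along generalized geodesics. -/
def ConvexAlongGenGeod {d : ℕ} (G : Measure (Ed d) → EReal) : Prop :=
  ∀ μ0 ∈ P2 d, ∀ μ1 ∈ P2 d, ∀ base ∈ P2 d,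
    ∃ curve : ℝ → Measure (Ed d), IsGenGeodesic curve μ0 μ1 base ∧
      ∀ t ∈ Set.Icc (0 : ℝ) 1,
        G (curve t) ≤ ((1 - t : ℝ) : EReal) * G μ0 + ((t : ℝ) : EReal) * G μ1

/-- `G` is proper: never `⊥` and finite somewhere on `P2`. -/
def ProperOn {d : ℕ} (G : Measure (Ed d) → EReal) : Prop :=
  (∀ μ, G μ ≠ ⊥) ∧ ∃ μ ∈ P2 d, G μ ≠ ⊤

/-- Sequential lower semicontinuity with respect to `W2`. -/
def LscW2 {d : ℕ} (G : Measure (Ed d) → EReal) : Prop :=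
  ∀ μ ∈ P2 d, ∀ s : ℕ → Measure (Ed d), (∀ n, s n ∈ P2 d) →
    Tendsto (fun n => W2 (s n) μ) atTop (𝓝 0) →
    G μ ≤ liminf (fun n => G (s n)) atTop

/-- The JKO (Moreau–Yosida) energy `ν ↦ G ν + (1/(2τ)) W2²(ν, μ)`. -/
def JKOEnergy {d : ℕ} (G : Measure (Ed d) → EReal) (τ : ℝ)
    (μ ν : Measure (Ed d)) : EReal :=
  G ν + ((1 / (2 * τ) * (W2 ν μ) ^ 2 : ℝ) : EReal)

/-- `ν` is a minimizer over `P2` of the JKO energy with base point `μ`. -/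
def IsJKOMin {d : ℕ} (G : Measure (Ed d) → EReal) (τ : ℝ)
    (μ ν : Measure (Ed d)) : Prop :=
  ν ∈ P2 d ∧ ∀ ρ ∈ P2 d, JKOEnergy G τ μ ν ≤ JKOEnergy G τ μ ρ

/-- `μ` is a global minimizer of `G` over `P2`. -/
def IsArgminG {d : ℕ} (G : Measure (Ed d) → EReal) (μ : Measure (Ed d)) : Prop :=
  μ ∈ P2 d ∧ ∀ ν ∈ P2 d, G μ ≤ G ν

/-- The infimum of `G` over `P2`. -/
def infG {d : ℕ} (G : Measure (Ed d) → EReal) : EReal := sInf (G '' P2 d)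

/-- Convergence in the topology `τ_{w,2}`: integrals of continuous functions with
subquadratic growth converge. -/
def TendstoWeak2 {d : ℕ} (s : ℕ → Measure (Ed d)) (μ : Measure (Ed d)) : Prop :=
  ∀ f : Ed d → ℝ, Continuous f →
    Tendsto (fun x => f x / (1 + ‖x‖ ^ 2)) (comap (fun x : Ed d => ‖x‖) atTop) (𝓝 0) →
    Tendsto (fun n => ∫ x, f x ∂(s n)) atTop (𝓝 (∫ x, f x ∂μ))

/-- Narrow convergence: integrals of bounded continuous functions converge. -/
def TendstoNarrow {d : ℕ} (s : ℕ → Measure (Ed d)) (μ : Measure (Ed d)) : Prop :=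
  ∀ f : Ed d → ℝ, Continuous f → (∃ M, ∀ x, |f x| ≤ M) →
    Tendsto (fun n => ∫ x, f x ∂(s n)) atTop (𝓝 (∫ x, f x ∂μ))

/-- The pushforward by the explicit gradient step `x ↦ x - τ ∇F(x)`. -/
def gradStep {d : ℕ} (f' : Ed d → Ed d) (τ : ℝ) (μ : Measure (Ed d)) : Measure (Ed d) :=
  μ.map (fun x => x - τ • f' x)

/-- The composite objective `G(μ) = ∫ F dμ + H(μ)`. -/
def Gsum {d : ℕ} (F : Ed d → ℝ) (H : Measure (Ed d) → EReal)
    (μ : Measure (Ed d)) : EReal :=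
  ((∫ x, F x ∂μ : ℝ) : EReal) + H μ

end
noncomputable section Core

open ProbabilityTheory

variable {d : ℕ}

/-- square of nnnorm as ofReal. -/
lemma ofReal_norm_sq (v : Ed d) :
    ENNReal.ofReal (‖v‖ ^ (2:ℝ)) = (‖v‖₊ : ℝ≥0∞) ^ (2:ℕ) := by
  rw [show ((2:ℝ)) = ((2:ℕ):ℝ) by norm_num, Real.rpow_natCast]
  rw [pow_two, pow_two, ENNReal.ofReal_mul (norm_nonneg v), ofReal_norm, enorm_eq_nnnorm]

lemma ofReal_norm_sq' (v : Ed d) :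
    ENNReal.ofReal (‖v‖ ^ (2:ℕ)) = (‖v‖₊ : ℝ≥0∞) ^ (2:ℕ) := by
  rw [pow_two, pow_two, ENNReal.ofReal_mul (norm_nonneg v), ofReal_norm, enorm_eq_nnnorm]

lemma wcost_eq (γ : Measure (Ed d × Ed d)) :
    Wcost 2 γ = ∫⁻ z, ((‖z.1 - z.2‖₊ : ℝ≥0∞)) ^ (2:ℕ) ∂γ := by
  unfold Wcost
  congr 1
  ext z
  exact ofReal_norm_sq _

lemma cost_meas : Measurable (fun z : Ed d × Ed d => ((‖z.1 - z.2‖₊ : ℝ≥0∞)) ^ (2:ℕ)) := by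
  fun_prop

lemma minCost_le_wcost {γ : Measure (Ed d × Ed d)} {μ ν : Measure (Ed d)}
    (h : IsCoupling γ μ ν) : minCost 2 μ ν ≤ Wcost 2 γ :=
  iInf_le (fun γ : {γ // IsCoupling γ μ ν} => Wcost 2 γ.1) ⟨γ, h⟩

lemma lintegral_fst_coupling {γ : Measure (Ed d × Ed d)} {μ ν : Measure (Ed d)}
    (h : IsCoupling γ μ ν) {f : Ed d → ℝ≥0∞} (hf : Measurable f) :
    ∫⁻ z, f z.1 ∂γ = ∫⁻ x, f x ∂μ := by
  rw [← h.2.1, lintegral_map hf measurable_fst]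

lemma lintegral_snd_coupling {γ : Measure (Ed d × Ed d)} {μ ν : Measure (Ed d)}
    (h : IsCoupling γ μ ν) {f : Ed d → ℝ≥0∞} (hf : Measurable f) :
    ∫⁻ z, f z.2 ∂γ = ∫⁻ x, f x ∂ν := by
  rw [← h.2.2, lintegral_map hf measurable_snd]

/-- second moment -/
def M2 {d : ℕ} (μ : Measure (Ed d)) : ℝ≥0∞ := ∫⁻ x, (‖x‖₊ : ℝ≥0∞) ^ (2:ℕ) ∂μ

lemma m2_meas : Measurable (fun x : Ed d => (‖x‖₊ : ℝ≥0∞) ^ (2:ℕ)) := by fun_prop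

lemma M2_lt_top {μ : Measure (Ed d)} (h : μ ∈ P2 d) : M2 μ < ⊤ := by
  have : M2 μ = ∫⁻ x, ENNReal.ofReal (‖x‖ ^ 2) ∂μ := by
    unfold M2; congr 1; ext x; exact (ofReal_norm_sq' x).symm
  rw [this]; exact h.2

lemma sq_nnnorm_sub_le (a b : Ed d) :
    ((‖a - b‖₊ : ℝ≥0∞)) ^ (2:ℕ) ≤ 2 * (‖a‖₊ : ℝ≥0∞) ^ (2:ℕ) + 2 * (‖b‖₊ : ℝ≥0∞) ^ (2:ℕ) := by
  have hr : ‖a - b‖ ^ (2:ℕ) ≤ 2 * ‖a‖ ^ (2:ℕ) + 2 * ‖b‖ ^ (2:ℕ) := by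
    nlinarith [norm_sub_le a b, norm_nonneg a, norm_nonneg b, norm_nonneg (a - b), sq_nonneg (‖a‖ - ‖b‖)]
  calc ((‖a - b‖₊ : ℝ≥0∞)) ^ (2:ℕ) = ENNReal.ofReal (‖a - b‖ ^ 2) := (ofReal_norm_sq' _).symm
    _ ≤ ENNReal.ofReal (2 * ‖a‖ ^ 2 + 2 * ‖b‖ ^ 2) := ENNReal.ofReal_le_ofReal hr
    _ ≤ 2 * (‖a‖₊ : ℝ≥0∞) ^ (2:ℕ) + 2 * (‖b‖₊ : ℝ≥0∞) ^ (2:ℕ) := by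
        rw [ENNReal.ofReal_add (by positivity) (by positivity),
          ENNReal.ofReal_mul (by norm_num), ENNReal.ofReal_mul (by norm_num),
          ofReal_norm_sq', ofReal_norm_sq']
        simp [ENNReal.ofReal_ofNat]

lemma wcost_le_moments {γ : Measure (Ed d × Ed d)} {μ ν : Measure (Ed d)}
    (h : IsCoupling γ μ ν) : Wcost 2 γ ≤ 2 * M2 μ + 2 * M2 ν := by
  rw [wcost_eq]
  calc ∫⁻ z, ((‖z.1 - z.2‖₊ : ℝ≥0∞)) ^ (2:ℕ) ∂γ
      ≤ ∫⁻ z, (2 * (‖z.1‖₊ : ℝ≥0∞) ^ (2:ℕ) + 2 * (‖z.2‖₊ : ℝ≥0∞) ^ (2:ℕ)) ∂γ :=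
        lintegral_mono fun z => sq_nnnorm_sub_le z.1 z.2
    _ = 2 * M2 μ + 2 * M2 ν := by
        rw [lintegral_add_left (by fun_prop), lintegral_const_mul _ (by fun_prop),
          lintegral_const_mul _ (by fun_prop),
          lintegral_fst_coupling h m2_meas, lintegral_snd_coupling h m2_meas]
        rfl

lemma isCoupling_prod {μ ν : Measure (Ed d)} (hμ : IsProbabilityMeasure μ)
    (hν : IsProbabilityMeasure ν) : IsCoupling (μ.prod ν) μ ν := by
  refine ⟨by infer_instance, ?_, ?_⟩
  · exact Measure.fst_prod
  · exact Measure.snd_prod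

lemma minCost_lt_top {μ ν : Measure (Ed d)} (hμ : μ ∈ P2 d) (hν : ν ∈ P2 d) :
    minCost 2 μ ν < ⊤ := by
  haveI := hμ.1; haveI := hν.1
  have h := isCoupling_prod hμ.1 hν.1
  calc minCost 2 μ ν ≤ Wcost 2 (μ.prod ν) := minCost_le_wcost h
    _ ≤ 2 * M2 μ + 2 * M2 ν := wcost_le_moments h
    _ < ⊤ := by
        have h1 := M2_lt_top hμ; have h2 := M2_lt_top hν
        finiteness

lemma isCoupling_swap {γ : Measure (Ed d × Ed d)} {μ ν : Measure (Ed d)}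
    (h : IsCoupling γ μ ν) : IsCoupling (γ.map Prod.swap) ν μ := by
  obtain ⟨hp, h1, h2⟩ := h
  haveI := hp
  refine ⟨Measure.isProbabilityMeasure_map measurable_swap.aemeasurable, ?_, ?_⟩
  · rw [Measure.map_map measurable_fst measurable_swap]; exact h2
  · rw [Measure.map_map measurable_snd measurable_swap]; exact h1

lemma wcost_swap (γ : Measure (Ed d × Ed d)) :
    Wcost 2 (γ.map Prod.swap) = Wcost 2 γ := by
  rw [wcost_eq, wcost_eq, lintegral_map cost_meas measurable_swap]
  congr 1; ext z
  rw [Prod.fst_swap, Prod.snd_swap, ← neg_sub, nnnorm_neg]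

lemma minCost_symm (μ ν : Measure (Ed d)) : minCost 2 μ ν = minCost 2 ν μ := by
  have key : ∀ (α β : Measure (Ed d)), minCost 2 α β ≤ minCost 2 β α := by
    intro α β
    refine le_iInf fun γ => ?_
    calc minCost 2 α β ≤ Wcost 2 (γ.1.map Prod.swap) := minCost_le_wcost (isCoupling_swap γ.2)
      _ = Wcost 2 γ.1 := wcost_swap _
  exact le_antisymm (key μ ν) (key ν μ)

end Core

noncomputable section Triangle

open ProbabilityTheory

variable {d : ℕ}

lemma glue_step {μ1 μ2 μ3 : Measure (Ed d)} {γ12 γ23 : Measure (Ed d × Ed d)}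
    (h12 : IsCoupling γ12 μ1 μ2) (h23 : IsCoupling γ23 μ2 μ3) :
    (minCost 2 μ1 μ3) ^ ((1:ℝ)/2) ≤ (Wcost 2 γ12) ^ ((1:ℝ)/2) + (Wcost 2 γ23) ^ ((1:ℝ)/2) := by
  haveI hp12 := h12.1
  haveI hp23 := h23.1
  haveI : IsProbabilityMeasure μ2 := by rw [← h12.2.2]; exact Measure.isProbabilityMeasure_map measurable_snd.aemeasurable
  set ρ : Measure (Ed d × Ed d) := γ12.map Prod.swap with hρdef
  haveI : IsProbabilityMeasure ρ := Measure.isProbabilityMeasure_map measurable_swap.aemeasurable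
  have hρfst : ρ.fst = μ2 := by
    rw [Measure.fst, hρdef, Measure.map_map measurable_fst measurable_swap]
    exact h12.2.2
  have hγfst : γ23.fst = μ2 := h23.2.1
  set k := ρ.condKernel with hk
  set l := γ23.condKernel with hl
  have hkρ : μ2 ⊗ₘ k = ρ := by rw [← hρfst, hk]; exact ρ.disintegrate ρ.condKernel
  have hlγ : μ2 ⊗ₘ l = γ23 := by rw [← hγfst, hl]; exact γ23.disintegrate γ23.condKernel
  set m : Measure (Ed d × Ed d × Ed d) := μ2 ⊗ₘ (k ×ₖ l) with hm
  haveI : IsProbabilityMeasure m := by rw [hm]; infer_instance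
  -- first marginal pair
  have hm1 : m.map (fun p => (p.1, p.2.1)) = ρ := by
    rw [← hkρ]
    ext s hs
    rw [Measure.map_apply (by fun_prop) hs,
      Measure.compProd_apply (hs.preimage (by fun_prop)), Measure.compProd_apply hs]
    congr 1; ext y
    rw [Kernel.prod_apply]
    have hset : (Prod.mk y ⁻¹' ((fun p : Ed d × Ed d × Ed d => (p.1, p.2.1)) ⁻¹' s))
        = (Prod.mk y ⁻¹' s) ×ˢ Set.univ := by
      ext q; simp
    rw [hset, Measure.prod_prod, measure_univ, mul_one]
  have hm2 : m.map (fun p => (p.1, p.2.2)) = γ23 := by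
    rw [← hlγ]
    ext s hs
    rw [Measure.map_apply (by fun_prop) hs,
      Measure.compProd_apply (hs.preimage (by fun_prop)), Measure.compProd_apply hs]
    congr 1; ext y
    rw [Kernel.prod_apply]
    have hset : (Prod.mk y ⁻¹' ((fun p : Ed d × Ed d × Ed d => (p.1, p.2.2)) ⁻¹' s))
        = Set.univ ×ˢ (Prod.mk y ⁻¹' s) := by
      ext q; simp
    rw [hset, Measure.prod_prod, measure_univ, one_mul]
  -- the glued coupling
  set γ13 : Measure (Ed d × Ed d) := m.map (fun p => (p.2.1, p.2.2)) with hγ13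
  have hc13 : IsCoupling γ13 μ1 μ3 := by
    refine ⟨Measure.isProbabilityMeasure_map (by fun_prop), ?_, ?_⟩
    · rw [hγ13, Measure.map_map measurable_fst (by fun_prop)]
      have : (Prod.fst ∘ fun p : Ed d × Ed d × Ed d => (p.2.1, p.2.2))
          = (Prod.snd ∘ fun p : Ed d × Ed d × Ed d => (p.1, p.2.1)) := rfl
      rw [this, ← Measure.map_map measurable_snd (by fun_prop), hm1, hρdef,
        Measure.map_map measurable_snd measurable_swap]
      exact h12.2.1
    · rw [hγ13, Measure.map_map measurable_snd (by fun_prop)]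
      have : (Prod.snd ∘ fun p : Ed d × Ed d × Ed d => (p.2.1, p.2.2))
          = (Prod.snd ∘ fun p : Ed d × Ed d × Ed d => (p.1, p.2.2)) := rfl
      rw [this, ← Measure.map_map measurable_snd (by fun_prop), hm2]
      exact h23.2.2
  -- eLpNorm bound
  set f : Ed d × Ed d × Ed d → Ed d := fun p => p.2.1 - p.1 with hf
  set g : Ed d × Ed d × Ed d → Ed d := fun p => p.1 - p.2.2 with hg
  have hfg : f + g = fun p => p.2.1 - p.2.2 := by
    funext p; simp [hf, hg]; try abel
  have hel : eLpNorm (f + g) 2 m ≤ eLpNorm f 2 m + eLpNorm g 2 m :=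
    eLpNorm_add_le (by fun_prop) (by fun_prop) one_le_two
  have elp_eq : ∀ (h : Ed d × Ed d × Ed d → Ed d),
      eLpNorm h 2 m = (∫⁻ p, ((‖h p‖₊ : ℝ≥0∞)) ^ (2:ℕ) ∂m) ^ ((1:ℝ)/2) := by
    intro h
    rw [eLpNorm_eq_lintegral_rpow_enorm_toReal (by norm_num) (by norm_num)]
    have h2 : ((2:ℝ≥0∞)).toReal = (2:ℝ) := by norm_num
    rw [h2]
    congr 1
    · congr 1; ext p
      rw [← ENNReal.rpow_natCast]
      norm_num [enorm_eq_nnnorm]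
  -- identify the three lintegrals
  have hIf : ∫⁻ p, ((‖f p‖₊ : ℝ≥0∞)) ^ (2:ℕ) ∂m = Wcost 2 γ12 := by
    have h1 : ∫⁻ p, ((‖f p‖₊ : ℝ≥0∞)) ^ (2:ℕ) ∂m
        = ∫⁻ q, ((‖q.2 - q.1‖₊ : ℝ≥0∞)) ^ (2:ℕ) ∂(m.map (fun p => (p.1, p.2.1))) := by
      rw [lintegral_map (by fun_prop) (by fun_prop)]
    rw [h1, hm1, hρdef, lintegral_map (by fun_prop) measurable_swap, wcost_eq]
    congr 1
  have hIg : ∫⁻ p, ((‖g p‖₊ : ℝ≥0∞)) ^ (2:ℕ) ∂m = Wcost 2 γ23 := by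
    have h1 : ∫⁻ p, ((‖g p‖₊ : ℝ≥0∞)) ^ (2:ℕ) ∂m
        = ∫⁻ q, ((‖q.1 - q.2‖₊ : ℝ≥0∞)) ^ (2:ℕ) ∂(m.map (fun p => (p.1, p.2.2))) := by
      rw [lintegral_map (by fun_prop) (by fun_prop)]
    rw [h1, hm2, wcost_eq]
  have hIfg : ∫⁻ p, ((‖(f+g) p‖₊ : ℝ≥0∞)) ^ (2:ℕ) ∂m = Wcost 2 γ13 := by
    rw [hγ13, wcost_eq, lintegral_map (by fun_prop) (by fun_prop), hfg]
  calc (minCost 2 μ1 μ3) ^ ((1:ℝ)/2) ≤ (Wcost 2 γ13) ^ ((1:ℝ)/2) :=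
        ENNReal.rpow_le_rpow (minCost_le_wcost hc13) (by norm_num)
    _ = eLpNorm (f + g) 2 m := by rw [elp_eq, hIfg]
    _ ≤ eLpNorm f 2 m + eLpNorm g 2 m := hel
    _ = (Wcost 2 γ12) ^ ((1:ℝ)/2) + (Wcost 2 γ23) ^ ((1:ℝ)/2) := by
        rw [elp_eq, elp_eq, hIf, hIg]

lemma sqrt_minCost_triangle (μ1 μ2 μ3 : Measure (Ed d)) :
    (minCost 2 μ1 μ3) ^ ((1:ℝ)/2)
      ≤ (minCost 2 μ1 μ2) ^ ((1:ℝ)/2) + (minCost 2 μ2 μ3) ^ ((1:ℝ)/2) := by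
  have hrw : ∀ (α β : Measure (Ed d)), (minCost 2 α β) ^ ((1:ℝ)/2)
      = ⨅ γ : {γ : Measure (Ed d × Ed d) // IsCoupling γ α β}, (Wcost 2 γ.1) ^ ((1:ℝ)/2) := by
    intro α β
    unfold minCost
    exact (ENNReal.orderIsoRpow ((1:ℝ)/2) (by norm_num)).map_iInf _
  rw [hrw μ1 μ2, hrw μ2 μ3, ENNReal.iInf_add]
  refine le_iInf fun γ12 => ?_
  rw [ENNReal.add_iInf]
  refine le_iInf fun γ23 => ?_
  exact glue_step γ12.2 γ23.2

end Triangle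

noncomputable section W2Lemmas

variable {d : ℕ}

lemma W2_def (μ ν : Measure (Ed d)) : W2 μ ν = ((minCost 2 μ ν) ^ ((1:ℝ)/2)).toReal := by
  unfold W2 Wp
  norm_num

lemma W2_nonneg (μ ν : Measure (Ed d)) : 0 ≤ W2 μ ν := ENNReal.toReal_nonneg

lemma W2_symm (μ ν : Measure (Ed d)) : W2 μ ν = W2 ν μ := by
  rw [W2_def, W2_def, minCost_symm]

lemma W2_sq (μ ν : Measure (Ed d)) : W2 μ ν ^ (2:ℕ) = (minCost 2 μ ν).toReal := by
  rw [W2_def, ← ENNReal.toReal_rpow]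
  rw [← Real.rpow_natCast ((minCost 2 μ ν).toReal ^ ((1:ℝ)/2)) 2,
    ← Real.rpow_mul ENNReal.toReal_nonneg]
  norm_num

lemma W2_triangle {μ1 μ2 μ3 : Measure (Ed d)} (h12 : minCost 2 μ1 μ2 ≠ ⊤)
    (h23 : minCost 2 μ2 μ3 ≠ ⊤) :
    W2 μ1 μ3 ≤ W2 μ1 μ2 + W2 μ2 μ3 := by
  rw [W2_def, W2_def, W2_def]
  have hb : (minCost 2 μ1 μ2) ^ ((1:ℝ)/2) + (minCost 2 μ2 μ3) ^ ((1:ℝ)/2) ≠ ⊤ := by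
    apply ENNReal.add_ne_top.mpr
    constructor <;> exact ENNReal.rpow_ne_top_of_nonneg (by norm_num) ‹_›
  calc ((minCost 2 μ1 μ3) ^ ((1:ℝ)/2)).toReal
      ≤ ((minCost 2 μ1 μ2) ^ ((1:ℝ)/2) + (minCost 2 μ2 μ3) ^ ((1:ℝ)/2)).toReal :=
        ENNReal.toReal_mono hb (sqrt_minCost_triangle μ1 μ2 μ3)
    _ = _ := ENNReal.toReal_add (ENNReal.rpow_ne_top_of_nonneg (by norm_num) h12)
        (ENNReal.rpow_ne_top_of_nonneg (by norm_num) h23)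

end W2Lemmas


noncomputable section KeyStep

variable {d : ℕ}

lemma mem_P2_iff (μ : Measure (Ed d)) : μ ∈ P2 d ↔ IsProbabilityMeasure μ ∧ M2 μ < ⊤ := by
  unfold P2 M2
  constructor <;> rintro ⟨h1, h2⟩ <;> refine ⟨h1, ?_⟩
  · convert h2 using 1; congr 1; ext x; exact (ofReal_norm_sq' x).symm
  · convert h2 using 1; congr 1; ext x; exact ofReal_norm_sq' x

lemma interp_identity (t : ℝ) (x y z : Ed d) :
    ‖((1-t) • y + t • z) - x‖^2 + t*(1-t)*‖y - z‖^2
      = (1-t)*‖y - x‖^2 + t*‖z - x‖^2 := by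
  have hv : ((1-t) • y + t • z) - x = (1-t) • (y - x) + t • (z - x) := by
    module
  have hab : y - z = (y - x) - (z - x) := by abel
  rw [hv, hab]
  set a := y - x
  set b := z - x
  rw [norm_add_sq_real, norm_sub_sq_real, norm_smul, norm_smul,
    real_inner_smul_left, real_inner_smul_right, Real.norm_eq_abs, Real.norm_eq_abs,
    mul_pow, mul_pow, sq_abs, sq_abs]
  ring

lemma sq_nnnorm_interp_le {t : ℝ} (ht : t ∈ Set.Icc (0:ℝ) 1) (a b : Ed d) :
    ((‖(1-t) • a + t • b‖₊ : ℝ≥0∞)) ^ (2:ℕ)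
      ≤ 2 * (‖a‖₊ : ℝ≥0∞) ^ (2:ℕ) + 2 * (‖b‖₊ : ℝ≥0∞) ^ (2:ℕ) := by
  have h1 : ‖(1-t) • a + t • b‖ ≤ ‖a‖ + ‖b‖ := by
    calc ‖(1-t) • a + t • b‖ ≤ ‖(1-t) • a‖ + ‖t • b‖ := norm_add_le _ _
      _ = (1-t) * ‖a‖ + t * ‖b‖ := by
          rw [norm_smul, norm_smul, Real.norm_eq_abs, Real.norm_eq_abs,
            abs_of_nonneg (by linarith [ht.2]), abs_of_nonneg ht.1]
      _ ≤ ‖a‖ + ‖b‖ := by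
          nlinarith [norm_nonneg a, norm_nonneg b, ht.1, ht.2]
  have hr : ‖(1-t) • a + t • b‖ ^ (2:ℕ) ≤ 2 * ‖a‖ ^ (2:ℕ) + 2 * ‖b‖ ^ (2:ℕ) := by
    nlinarith [norm_nonneg ((1-t) • a + t • b), norm_nonneg a, norm_nonneg b,
      sq_nonneg (‖a‖ - ‖b‖)]
  calc ((‖(1-t) • a + t • b‖₊ : ℝ≥0∞)) ^ (2:ℕ)
      = ENNReal.ofReal (‖(1-t) • a + t • b‖ ^ 2) := (ofReal_norm_sq' _).symm
    _ ≤ ENNReal.ofReal (2 * ‖a‖ ^ 2 + 2 * ‖b‖ ^ 2) := ENNReal.ofReal_le_ofReal hr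
    _ ≤ 2 * (‖a‖₊ : ℝ≥0∞) ^ (2:ℕ) + 2 * (‖b‖₊ : ℝ≥0∞) ^ (2:ℕ) := by
        rw [ENNReal.ofReal_add (by positivity) (by positivity),
          ENNReal.ofReal_mul (by norm_num), ENNReal.ofReal_mul (by norm_num),
          ofReal_norm_sq', ofReal_norm_sq']
        simp [ENNReal.ofReal_ofNat]

lemma key_step (G : Measure (Ed d) → EReal)
    (hBot : ∀ μ, G μ ≠ ⊥) (hConv : ConvexAlongGenGeod G) {τ : ℝ} (hτ : 0 < τ)
    {ν μ0 μs : Measure (Ed d)} (hν : ν ∈ P2 d) (hμs : μs ∈ P2 d)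
    (hmin : IsJKOMin G τ ν μ0)
    (h0top : G μ0 ≠ ⊤) (hstop : G μs ≠ ⊤) :
    (G μ0).toReal + (1/(2*τ)) * W2 μ0 ν ^ (2:ℕ) + (1/(2*τ)) * W2 μ0 μs ^ (2:ℕ)
      ≤ (G μs).toReal + (1/(2*τ)) * W2 μs ν ^ (2:ℕ) := by
  have hμ0 : μ0 ∈ P2 d := hmin.1
  obtain ⟨curve, ⟨γ, hγp, hopt1, hopt2, hcurve⟩, hconvex⟩ := hConv μ0 hμ0 μs hμs ν hν
  haveI := hγp
  set c : ℝ := 1/(2*τ) with hc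
  have hcpos : 0 < c := by positivity
  -- marginals of γ
  have hmapb : γ.map (fun z => z.1) = ν := by
    have := hopt1.1.2.1
    rwa [Measure.map_map measurable_fst (by fun_prop)] at this
  have hmap1 : γ.map (fun z => z.2.1) = μ0 := by
    have := hopt1.1.2.2
    rwa [Measure.map_map measurable_snd (by fun_prop)] at this
  have hmap2 : γ.map (fun z => z.2.2) = μs := by
    have := hopt2.1.2.2
    rwa [Measure.map_map measurable_snd (by fun_prop)] at this
  have hlint1 : ∀ {f : Ed d → ℝ≥0∞}, Measurable f →
      ∫⁻ z, f z.2.1 ∂γ = ∫⁻ x, f x ∂μ0 := by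
    intro f hf; rw [← hmap1, lintegral_map hf (by fun_prop)]
  have hlint2 : ∀ {f : Ed d → ℝ≥0∞}, Measurable f →
      ∫⁻ z, f z.2.2 ∂γ = ∫⁻ x, f x ∂μs := by
    intro f hf; rw [← hmap2, lintegral_map hf (by fun_prop)]
  -- cost quantities
  set A : ℝ≥0∞ := ∫⁻ z : Ed d × Ed d × Ed d, ((‖z.1 - z.2.1‖₊ : ℝ≥0∞)) ^ (2:ℕ) ∂γ with hAdef
  set B : ℝ≥0∞ := ∫⁻ z : Ed d × Ed d × Ed d, ((‖z.1 - z.2.2‖₊ : ℝ≥0∞)) ^ (2:ℕ) ∂γ with hBdef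
  set D : ℝ≥0∞ := ∫⁻ z : Ed d × Ed d × Ed d, ((‖z.2.1 - z.2.2‖₊ : ℝ≥0∞)) ^ (2:ℕ) ∂γ with hDdef
  have hA : A = minCost 2 ν μ0 := by
    rw [← hopt1.2, wcost_eq, lintegral_map cost_meas (by fun_prop)]
  have hB : B = minCost 2 ν μs := by
    rw [← hopt2.2, wcost_eq, lintegral_map cost_meas (by fun_prop)]
  have hAfin : A ≠ ⊤ := by rw [hA]; exact (minCost_lt_top hν hμ0).ne
  have hBfin : B ≠ ⊤ := by rw [hB]; exact (minCost_lt_top hν hμs).ne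
  have hDcoup : IsCoupling (γ.map (fun z => (z.2.1, z.2.2))) μ0 μs := by
    refine ⟨Measure.isProbabilityMeasure_map (by fun_prop), ?_, ?_⟩
    · rw [Measure.map_map measurable_fst (by fun_prop)]; exact hmap1
    · rw [Measure.map_map measurable_snd (by fun_prop)]; exact hmap2
  have hDw : Wcost 2 (γ.map (fun z => (z.2.1, z.2.2))) = D := by
    rw [wcost_eq, lintegral_map cost_meas (by fun_prop)]
  have hminD : minCost 2 μ0 μs ≤ D := hDw ▸ minCost_le_wcost hDcoup
  have hDfin : D ≠ ⊤ := by
    refine ne_top_of_le_ne_top ?_ (hDw ▸ wcost_le_moments hDcoup)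
    have h1 := M2_lt_top hμ0
    have h2 := M2_lt_top hμs
    finiteness
  -- real versions
  set g0 : ℝ := (G μ0).toReal with hg0
  set gs : ℝ := (G μs).toReal with hgs
  have hG0 : G μ0 = (g0 : EReal) := (EReal.coe_toReal h0top (hBot μ0)).symm
  have hGs : G μs = (gs : EReal) := (EReal.coe_toReal hstop (hBot μs)).symm
  -- squared distances
  have hW0 : W2 μ0 ν ^ (2:ℕ) = A.toReal := by rw [W2_sq, minCost_symm, hA]
  have hWs : W2 μs ν ^ (2:ℕ) = B.toReal := by rw [W2_sq, minCost_symm, hB]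
  have hW0s : W2 μ0 μs ^ (2:ℕ) ≤ D.toReal := by
    rw [W2_sq]; exact ENNReal.toReal_mono hDfin hminD
  -- main estimate for t ∈ (0,1]
  have main : ∀ t ∈ Set.Ioc (0:ℝ) 1,
      g0 + c * A.toReal + (1-t) * (c * D.toReal) ≤ gs + c * B.toReal := by
    intro t ht
    have htmem : t ∈ Set.Icc (0:ℝ) 1 := ⟨le_of_lt ht.1, ht.2⟩
    have ht0 : 0 ≤ t := htmem.1
    have ht1 : t ≤ 1 := htmem.2
    have hcurv := hcurve t htmem
    set Ft : Ed d × Ed d × Ed d → Ed d := fun z => (1-t) • z.2.1 + t • z.2.2 with hFt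
    -- curve t ∈ P2
    have hP2t : curve t ∈ P2 d := by
      rw [mem_P2_iff, hcurv]
      constructor
      · exact Measure.isProbabilityMeasure_map (by fun_prop)
      · unfold M2
        rw [lintegral_map m2_meas (by fun_prop)]
        calc ∫⁻ z, ((‖Ft z‖₊ : ℝ≥0∞)) ^ (2:ℕ) ∂γ
            ≤ ∫⁻ z, (2 * (‖z.2.1‖₊ : ℝ≥0∞) ^ (2:ℕ) + 2 * (‖z.2.2‖₊ : ℝ≥0∞) ^ (2:ℕ)) ∂γ :=
              lintegral_mono fun z => sq_nnnorm_interp_le htmem z.2.1 z.2.2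
          _ = 2 * M2 μ0 + 2 * M2 μs := by
              rw [lintegral_add_left (by fun_prop), lintegral_const_mul _ (by fun_prop),
                lintegral_const_mul _ (by fun_prop), hlint1 m2_meas, hlint2 m2_meas]
              rfl
          _ < ⊤ := by
              have h1 := M2_lt_top hμ0
              have h2 := M2_lt_top hμs
              finiteness
    -- cost of the interpolated coupling
    set Ct : ℝ≥0∞ := ∫⁻ z, ((‖Ft z - z.1‖₊ : ℝ≥0∞)) ^ (2:ℕ) ∂γ with hCtdef
    -- the key identity
    have hiden : Ct + ENNReal.ofReal (t*(1-t)) * D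
        = ENNReal.ofReal (1-t) * A + ENNReal.ofReal t * B := by
      have hpt : (fun z : Ed d × Ed d × Ed d =>
            ((‖Ft z - z.1‖₊ : ℝ≥0∞)) ^ (2:ℕ) + ENNReal.ofReal (t*(1-t)) * ((‖z.2.1 - z.2.2‖₊ : ℝ≥0∞)) ^ (2:ℕ))
          = (fun z : Ed d × Ed d × Ed d =>
            ENNReal.ofReal (1-t) * ((‖z.1 - z.2.1‖₊ : ℝ≥0∞)) ^ (2:ℕ) + ENNReal.ofReal t * ((‖z.1 - z.2.2‖₊ : ℝ≥0∞)) ^ (2:ℕ)) := by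
        funext z
        have hid := interp_identity t z.1 z.2.1 z.2.2
        have e1 : ‖z.2.1 - z.1‖ = ‖z.1 - z.2.1‖ := by rw [← neg_sub, norm_neg]
        have e2 : ‖z.2.2 - z.1‖ = ‖z.1 - z.2.2‖ := by rw [← neg_sub, norm_neg]
        rw [e1, e2] at hid
        have lhs_eq : ((‖Ft z - z.1‖₊ : ℝ≥0∞)) ^ (2:ℕ) + ENNReal.ofReal (t*(1-t)) * ((‖z.2.1 - z.2.2‖₊ : ℝ≥0∞)) ^ (2:ℕ)
            = ENNReal.ofReal (‖Ft z - z.1‖^2 + t*(1-t)*‖z.2.1 - z.2.2‖^2) := by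
          rw [ENNReal.ofReal_add (by positivity)
              (mul_nonneg (mul_nonneg ht0 (by linarith)) (by positivity)),
            ENNReal.ofReal_mul (mul_nonneg ht0 (by linarith)), ofReal_norm_sq', ofReal_norm_sq']
        have rhs_eq : ENNReal.ofReal (1-t) * ((‖z.1 - z.2.1‖₊ : ℝ≥0∞)) ^ (2:ℕ) + ENNReal.ofReal t * ((‖z.1 - z.2.2‖₊ : ℝ≥0∞)) ^ (2:ℕ)
            = ENNReal.ofReal ((1-t)*‖z.1 - z.2.1‖^2 + t*‖z.1 - z.2.2‖^2) := by
          rw [ENNReal.ofReal_add (mul_nonneg (by linarith) (by positivity))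
              (mul_nonneg ht0 (by positivity)),
            ENNReal.ofReal_mul (by linarith), ENNReal.ofReal_mul ht0,
            ofReal_norm_sq', ofReal_norm_sq']
        rw [lhs_eq, rhs_eq, hid]
      have hlhs : ∫⁻ z, (((‖Ft z - z.1‖₊ : ℝ≥0∞)) ^ (2:ℕ) + ENNReal.ofReal (t*(1-t)) * ((‖z.2.1 - z.2.2‖₊ : ℝ≥0∞)) ^ (2:ℕ)) ∂γ
          = Ct + ENNReal.ofReal (t*(1-t)) * D := by
        rw [lintegral_add_left (by fun_prop), lintegral_const_mul _ (by fun_prop)]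
      have hrhs : ∫⁻ z, (ENNReal.ofReal (1-t) * ((‖z.1 - z.2.1‖₊ : ℝ≥0∞)) ^ (2:ℕ) + ENNReal.ofReal t * ((‖z.1 - z.2.2‖₊ : ℝ≥0∞)) ^ (2:ℕ)) ∂γ
          = ENNReal.ofReal (1-t) * A + ENNReal.ofReal t * B := by
        rw [lintegral_add_left (by fun_prop), lintegral_const_mul _ (by fun_prop),
          lintegral_const_mul _ (by fun_prop)]
      rw [← hlhs, ← hrhs, hpt]
    have hCtfin : Ct ≠ ⊤ := by
      have : Ct ≤ ENNReal.ofReal (1-t) * A + ENNReal.ofReal t * B := by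
        rw [← hiden]; exact le_self_add
      refine ne_top_of_le_ne_top ?_ this
      exact (ENNReal.add_ne_top.mpr ⟨ENNReal.mul_ne_top ENNReal.ofReal_ne_top hAfin,
        ENNReal.mul_ne_top ENNReal.ofReal_ne_top hBfin⟩)
    -- coupling between curve t and ν
    have hCtcoup : IsCoupling (γ.map (fun z => (Ft z, z.1))) (curve t) ν := by
      refine ⟨Measure.isProbabilityMeasure_map (by fun_prop), ?_, ?_⟩
      · rw [Measure.map_map measurable_fst (by fun_prop)]
        exact hcurv.symm
      · rw [Measure.map_map measurable_snd (by fun_prop)]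
        exact hmapb
    have hCtW : Wcost 2 (γ.map (fun z => (Ft z, z.1))) = Ct := by
      rw [wcost_eq, lintegral_map cost_meas (by fun_prop)]
    have hminCt : minCost 2 (curve t) ν ≤ Ct := hCtW ▸ minCost_le_wcost hCtcoup
    -- real identity
    have hreal : Ct.toReal + (t*(1-t)) * D.toReal = (1-t) * A.toReal + t * B.toReal := by
      have := congrArg ENNReal.toReal hiden
      rwa [ENNReal.toReal_add hCtfin (ENNReal.mul_ne_top ENNReal.ofReal_ne_top hDfin),
        ENNReal.toReal_add (ENNReal.mul_ne_top ENNReal.ofReal_ne_top hAfin)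
          (ENNReal.mul_ne_top ENNReal.ofReal_ne_top hBfin),
        ENNReal.toReal_mul, ENNReal.toReal_mul, ENNReal.toReal_mul,
        ENNReal.toReal_ofReal (by nlinarith), ENNReal.toReal_ofReal (by linarith),
        ENNReal.toReal_ofReal (by linarith)] at this
    have hWct : W2 (curve t) ν ^ (2:ℕ) ≤ Ct.toReal := by
      rw [W2_sq]; exact ENNReal.toReal_mono hCtfin hminCt
    -- minimality in EReal
    have hE := hmin.2 (curve t) hP2t
    have hcx := hconvex t htmem
    rw [hG0, hGs] at hcx
    have hcxle : G (curve t) ≤ (((1-t) * g0 + t * gs : ℝ) : EReal) := by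
      calc G (curve t) ≤ ((1 - t : ℝ) : EReal) * (g0 : EReal) + ((t : ℝ) : EReal) * (gs : EReal) := hcx
        _ = (((1-t) * g0 + t * gs : ℝ) : EReal) := by
            rw [← EReal.coe_mul, ← EReal.coe_mul, ← EReal.coe_add]
    have hctop : G (curve t) ≠ ⊤ := (lt_of_le_of_lt hcxle (EReal.coe_lt_top _)).ne
    set gc : ℝ := (G (curve t)).toReal with hgc
    have hGc : G (curve t) = (gc : EReal) := (EReal.coe_toReal hctop (hBot _)).symm
    -- convert minimality to reals
    unfold JKOEnergy at hE
    rw [hG0, hGc] at hE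
    rw [← EReal.coe_add, ← EReal.coe_add, EReal.coe_le_coe_iff] at hE
    rw [hGc, EReal.coe_le_coe_iff] at hcxle
    -- assemble
    rw [hW0] at hE
    have hchain : g0 + c * A.toReal ≤ (1-t)*g0 + t*gs + c * ((1-t) * A.toReal + t * B.toReal - t*(1-t)*D.toReal) := by
      have h1 : c * W2 (curve t) ν ^ (2:ℕ) ≤ c * ((1-t) * A.toReal + t * B.toReal - t*(1-t)*D.toReal) := by
        apply mul_le_mul_of_nonneg_left _ (le_of_lt hcpos)
        calc W2 (curve t) ν ^ (2:ℕ) ≤ Ct.toReal := hWct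
          _ = (1-t) * A.toReal + t * B.toReal - t*(1-t)*D.toReal := by linarith
      calc g0 + c * A.toReal ≤ gc + c * W2 (curve t) ν ^ (2:ℕ) := hE
        _ ≤ (1-t)*g0 + t*gs + c * ((1-t) * A.toReal + t * B.toReal - t*(1-t)*D.toReal) := by
            have := hcxle
            have h2 := h1
            linarith
    have h5 : t * (g0 + c * A.toReal + (1-t) * (c * D.toReal)) ≤ t * (gs + c * B.toReal) := by
      nlinarith [hchain]
    exact (mul_le_mul_iff_right₀ ht.1).mp h5
  -- pass to the limit t → 0
  have hDnn : 0 ≤ c * D.toReal := mul_nonneg (le_of_lt hcpos) ENNReal.toReal_nonneg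
  have hXY : g0 + c * A.toReal + c * D.toReal ≤ gs + c * B.toReal := by
    apply _root_.le_of_forall_pos_le_add
    intro ε hε
    set q : ℝ := c * D.toReal with hq
    set t : ℝ := min 1 (ε/(q+1)) with htdef
    have hq0 : 0 ≤ q := hDnn
    have htpos : 0 < t := lt_min one_pos (by positivity)
    have ht1 : t ≤ 1 := min_le_left _ _
    have hmain := main t ⟨htpos, ht1⟩
    have htq : t * q ≤ ε := by
      have h1 : t ≤ ε/(q+1) := min_le_right _ _
      have h2 : t * q ≤ (ε/(q+1)) * q := mul_le_mul_of_nonneg_right h1 hq0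
      have h3 : (ε/(q+1)) * q ≤ ε := by
        rw [div_mul_eq_mul_div, div_le_iff₀ (by positivity)]
        nlinarith
      linarith
    nlinarith [hmain]
  -- conclude
  rw [hW0, hWs]
  have : c * (W2 μ0 μs ^ (2:ℕ)) ≤ c * D.toReal :=
    mul_le_mul_of_nonneg_left hW0s (le_of_lt hcpos)
  linarith

end KeyStep

noncomputable section Main

variable {d : ℕ}

lemma ereal_ne_top_of_add_coe_le {x y : EReal} {r s : ℝ}
    (h : x + (r : EReal) ≤ y + (s : EReal)) (hy : y ≠ ⊤) : x ≠ ⊤ := by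
  intro hx
  rw [hx, EReal.top_add_of_ne_bot (EReal.coe_ne_bot r), top_le_iff] at h
  exact (EReal.add_lt_top hy (EReal.coe_ne_top s)).ne h

theorem aux_jko_rate (G : Measure (Ed d) → EReal)
    (hProper : ProperOn G) (hConv : ConvexAlongGenGeod G)
    (hArgmin : ∃ μstar, IsArgminG G μstar)
    (ε : ℕ → ℝ) (hε : ∀ n, 0 ≤ ε n) (hεsum : Summable ε)
    (τ : ℕ → ℝ) (hτ : ∀ n, 0 < τ n)
    (J : ℝ → Measure (Ed d) → Measure (Ed d))
    (hJ : ∀ t : ℝ, 0 < t → ∀ μ ∈ P2 d, IsJKOMin G t μ (J t μ))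
    (μ : ℕ → Measure (Ed d)) (hμ : ∀ n, μ n ∈ P2 d)
    (herr : ∀ n, W2 (μ (n + 1)) (J (τ n) (μ n)) ≤ ε n)
    (j : ℕ → ℕ)
    (hj : ∀ n, 1 ≤ n → j n < n ∧
      ∀ i < n, G (J (τ (j n)) (μ (j n))) ≤ G (J (τ i) (μ i))) :
    ∃ C : ℝ, 0 < C ∧ ∀ n, 1 ≤ n →
      G (J (τ (j n)) (μ (j n))) ≤
        infG G + ((C / ∑ i ∈ Finset.range n, τ i : ℝ) : EReal) := by
  obtain ⟨hBot, μfin, hμfinP2, hμfinTop⟩ := hProper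
  obtain ⟨μstar, hstarP2, hstarMin⟩ := hArgmin
  have hstarTop : G μstar ≠ ⊤ := by
    intro h
    exact hμfinTop (top_le_iff.mp (h ▸ hstarMin μfin hμfinP2))
  set gs : ℝ := (G μstar).toReal with hgsdef
  have hGstar : G μstar = (gs : EReal) := (EReal.coe_toReal hstarTop (hBot _)).symm
  have hinfG : infG G = (gs : EReal) := by
    apply le_antisymm
    · exact sInf_le ⟨μstar, hstarP2, hGstar⟩
    · refine le_sInf ?_
      rintro x ⟨ρ, hρ, rfl⟩
      exact hGstar ▸ hstarMin ρ hρ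
  -- iterates; `Jn n` is definitionally `J (τ n) (μ n)`
  have hJn : ∀ n, IsJKOMin G (τ n) (μ n) (J (τ n) (μ n)) :=
    fun n => hJ (τ n) (hτ n) (μ n) (hμ n)
  have hJnP2 : ∀ n, J (τ n) (μ n) ∈ P2 d := fun n => (hJn n).1
  have hGJtop : ∀ n, G (J (τ n) (μ n)) ≠ ⊤ := by
    intro n
    have hE := (hJn n).2 μfin hμfinP2
    unfold JKOEnergy at hE
    exact ereal_ne_top_of_add_coe_le hE hμfinTop
  set g : ℕ → ℝ := fun n => (G (J (τ n) (μ n))).toReal with hgdef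
  have hGJn : ∀ n, G (J (τ n) (μ n)) = ((g n : ℝ) : EReal) :=
    fun n => (EReal.coe_toReal (hGJtop n) (hBot _)).symm
  set a : ℕ → ℝ := fun n => W2 (μ n) μstar with hadef
  set b : ℕ → ℝ := fun n => W2 (J (τ n) (μ n)) μstar with hbdef
  have ha0 : ∀ n, 0 ≤ a n := fun n => W2_nonneg _ _
  have hb0 : ∀ n, 0 ≤ b n := fun n => W2_nonneg _ _
  have hcn : ∀ n, (0:ℝ) < 1/(2*τ n) := fun n => by have := hτ n; positivity
  -- key step at each n
  have hstep : ∀ n, g n + (1/(2*τ n)) * W2 (J (τ n) (μ n)) (μ n) ^ (2:ℕ)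
        + (1/(2*τ n)) * b n ^ (2:ℕ)
      ≤ gs + (1/(2*τ n)) * a n ^ (2:ℕ) := by
    intro n
    have h := key_step G hBot hConv (hτ n) (hμ n) hstarP2 (hJn n) (hGJtop n) hstarTop
    have haw : W2 μstar (μ n) = a n := W2_symm _ _
    rw [haw] at h
    exact h
  have hgs_le : ∀ n, gs ≤ g n := by
    intro n
    exact EReal.toReal_le_toReal (hstarMin _ (hJnP2 n)) (hBot _) (hGJtop n)
  have hbn_le : ∀ n, b n ≤ a n := by
    intro n
    have h := hstep n
    have h1 : (0:ℝ) ≤ (1/(2*τ n)) * W2 (J (τ n) (μ n)) (μ n) ^ (2:ℕ) :=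
      mul_nonneg (hcn n).le (by positivity)
    have h2 : (1/(2*τ n)) * b n ^ (2:ℕ) ≤ (1/(2*τ n)) * a n ^ (2:ℕ) := by
      have := hgs_le n; linarith
    have h3 : b n ^ (2:ℕ) ≤ a n ^ (2:ℕ) := le_of_mul_le_mul_left (by linarith) (hcn n)
    exact (pow_le_pow_iff_left₀ (hb0 n) (ha0 n) (by norm_num)).mp h3
  have hkey : ∀ n, 2 * τ n * (g n - gs) ≤ a n ^ (2:ℕ) - b n ^ (2:ℕ) := by
    intro n
    have h := hstep n
    have h1 : (0:ℝ) ≤ (1/(2*τ n)) * W2 (J (τ n) (μ n)) (μ n) ^ (2:ℕ) :=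
      mul_nonneg (hcn n).le (by positivity)
    have htn := hτ n
    have h2 : g n - gs ≤ (1/(2*τ n)) * a n ^ (2:ℕ) - (1/(2*τ n)) * b n ^ (2:ℕ) := by
      linarith
    have h3 := mul_le_mul_of_nonneg_left h2 (by positivity : (0:ℝ) ≤ 2 * τ n)
    have h4 : 2 * τ n * ((1/(2*τ n)) * a n ^ (2:ℕ) - (1/(2*τ n)) * b n ^ (2:ℕ))
        = a n ^ (2:ℕ) - b n ^ (2:ℕ) := by
      field_simp
    linarith
  -- triangle inequality per step
  have htri : ∀ n, a (n+1) ≤ b n + ε n := by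
    intro n
    have h1 : minCost 2 (μ (n+1)) (J (τ n) (μ n)) ≠ ⊤ := (minCost_lt_top (hμ _) (hJnP2 n)).ne
    have h2 : minCost 2 (J (τ n) (μ n)) μstar ≠ ⊤ := (minCost_lt_top (hJnP2 n) hstarP2).ne
    have h0 : W2 (μ (n+1)) μstar
        ≤ W2 (μ (n+1)) (J (τ n) (μ n)) + W2 (J (τ n) (μ n)) μstar := W2_triangle h1 h2
    have h3 := herr n
    show W2 (μ (n+1)) μstar ≤ W2 (J (τ n) (μ n)) μstar + ε n
    linarith
  -- uniform bound R
  set E : ℝ := ∑' n, ε n with hEdef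
  have hE0 : 0 ≤ E := tsum_nonneg hε
  set R : ℝ := a 0 + E with hRdef
  have hRa : ∀ n, a n ≤ R := by
    have hind : ∀ n, a n ≤ a 0 + ∑ i ∈ Finset.range n, ε i := by
      intro n
      induction n with
      | zero => simp
      | succ k ih =>
        have h1 : a (k+1) ≤ a k + ε k := le_trans (htri k) (by have := hbn_le k; linarith)
        rw [Finset.sum_range_succ]
        linarith
    intro n
    have h2 : ∑ i ∈ Finset.range n, ε i ≤ E :=
      Summable.sum_le_tsum _ (fun i _ => hε i) hεsum
    have := hind n
    rw [hRdef]
    linarith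
  have hRb : ∀ n, b n ≤ R := fun n => le_trans (hbn_le n) (hRa n)
  have hR0 : 0 ≤ R := le_trans (ha0 0) (hRa 0)
  -- telescoping bound
  have htel : ∀ n, 2 * τ n * (g n - gs) ≤ a n ^ (2:ℕ) - a (n+1) ^ (2:ℕ) + 2*R*ε n := by
    intro n
    have hk := hkey n
    have hd : a (n+1) ^ (2:ℕ) - b n ^ (2:ℕ) ≤ 2*R*ε n := by
      rcases le_or_gt (a (n+1)) (b n) with h | h
      · have h1 : a (n+1) ^ (2:ℕ) ≤ b n ^ (2:ℕ) := pow_le_pow_left₀ (ha0 _) h 2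
        have h2 : (0:ℝ) ≤ 2*R*ε n :=
          mul_nonneg (mul_nonneg (by norm_num) hR0) (hε n)
        linarith
      · have h1 := htri n
        have h2 := hRa (n+1)
        have h3 := hRb n
        have h4 := hb0 n
        have h5 := hε n
        nlinarith
    linarith
  set K : ℝ := a 0 ^ (2:ℕ) + 2*R*E with hKdef
  have hsum : ∀ n, ∑ i ∈ Finset.range n, (2 * τ i * (g i - gs)) ≤ K := by
    intro n
    calc ∑ i ∈ Finset.range n, (2 * τ i * (g i - gs))
        ≤ ∑ i ∈ Finset.range n, (a i ^ (2:ℕ) - a (i+1) ^ (2:ℕ) + 2*R*ε i) :=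
          Finset.sum_le_sum (fun i _ => htel i)
      _ = (a 0 ^ (2:ℕ) - a n ^ (2:ℕ)) + 2*R * ∑ i ∈ Finset.range n, ε i := by
          rw [Finset.sum_add_distrib, Finset.sum_range_sub' (fun i => a i ^ (2:ℕ)),
            ← Finset.mul_sum]
      _ ≤ K := by
          have h1 : ∑ i ∈ Finset.range n, ε i ≤ E := Summable.sum_le_tsum _ (fun i _ => hε i) hεsum
          have h2 : (0:ℝ) ≤ a n ^ (2:ℕ) := by positivity
          have h3 : 2*R * ∑ i ∈ Finset.range n, ε i ≤ 2*R*E :=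
            mul_le_mul_of_nonneg_left h1 (by linarith)
          rw [hKdef]
          linarith
  -- conclusion
  refine ⟨max (K/2) 1, lt_of_lt_of_le one_pos (le_max_right _ _), ?_⟩
  intro n hn
  have hσpos : (0:ℝ) < ∑ i ∈ Finset.range n, τ i := by
    apply Finset.sum_pos (fun i _ => hτ i)
    rw [Finset.nonempty_range_iff]
    omega
  obtain ⟨hjlt, hjmin⟩ := hj n hn
  have hgj_le : ∀ i, i < n → g (j n) ≤ g i := by
    intro i hi
    exact EReal.toReal_le_toReal (hjmin i hi) (hBot _) (hGJtop i)
  have hmain : (g (j n) - gs) * ∑ i ∈ Finset.range n, τ i ≤ K/2 := by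
    calc (g (j n) - gs) * ∑ i ∈ Finset.range n, τ i
        = ∑ i ∈ Finset.range n, τ i * (g (j n) - gs) := by
          rw [Finset.mul_sum]
          exact Finset.sum_congr rfl fun i _ => mul_comm _ _
      _ ≤ ∑ i ∈ Finset.range n, τ i * (g i - gs) := by
          apply Finset.sum_le_sum
          intro i hi
          apply mul_le_mul_of_nonneg_left _ (hτ i).le
          have := hgj_le i (Finset.mem_range.mp hi)
          linarith
      _ = (1/2) * ∑ i ∈ Finset.range n, (2 * τ i * (g i - gs)) := by
          rw [Finset.mul_sum]
          exact Finset.sum_congr rfl fun i _ => by ring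
      _ ≤ K/2 := by
          have := hsum n
          linarith
  have hfinal : g (j n) ≤ gs + (max (K/2) 1) / ∑ i ∈ Finset.range n, τ i := by
    have h1 : g (j n) - gs ≤ (K/2) / ∑ i ∈ Finset.range n, τ i := by
      rw [le_div_iff₀ hσpos]
      linarith
    have h2 : (K/2) / ∑ i ∈ Finset.range n, τ i
        ≤ (max (K/2) 1) / ∑ i ∈ Finset.range n, τ i :=
      div_le_div_of_nonneg_right (le_max_left _ _) hσpos.le
    linarith
  calc G (J (τ (j n)) (μ (j n))) = ((g (j n) : ℝ) : EReal) := hGJn (j n)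
    _ ≤ (((gs + (max (K/2) 1) / ∑ i ∈ Finset.range n, τ i : ℝ)) : EReal) :=
        EReal.coe_le_coe_iff.mpr hfinal
    _ = infG G + (((max (K/2) 1) / ∑ i ∈ Finset.range n, τ i : ℝ) : EReal) := by
        rw [hinfG, ← EReal.coe_add]

end Main

/-- Best-iterate rate `G(β̄_n) − inf G = O(1/σ_n)` for the inexact JKO scheme with
distance-type errors. -/
theorem inexact_jko_best_iterate_rate {d : ℕ} (G : Measure (Ed d) → EReal)
    (hProper : ProperOn G) (hLsc : LscW2 G) (hConv : ConvexAlongGenGeod G)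
    (hArgmin : ∃ μstar, IsArgminG G μstar)
    (ε : ℕ → ℝ) (hε : ∀ n, 0 ≤ ε n) (hεsum : Summable ε)
    (τ : ℕ → ℝ) (hτ : ∀ n, 0 < τ n)
    (hτdiv : Tendsto (fun n => ∑ i ∈ Finset.range n, τ i) atTop atTop)
    (J : ℝ → Measure (Ed d) → Measure (Ed d))
    (hJ : ∀ t : ℝ, 0 < t → ∀ μ ∈ P2 d, IsJKOMin G t μ (J t μ))
    (μ : ℕ → Measure (Ed d)) (hμ : ∀ n, μ n ∈ P2 d)
    (herr : ∀ n, W2 (μ (n + 1)) (J (τ n) (μ n)) ≤ ε n)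
    (j : ℕ → ℕ)
    (hj : ∀ n, 1 ≤ n → j n < n ∧
      ∀ i < n, G (J (τ (j n)) (μ (j n))) ≤ G (J (τ i) (μ i))) :
    ∃ C : ℝ, 0 < C ∧ ∀ n, 1 ≤ n →
      G (J (τ (j n)) (μ (j n))) ≤
        infG G + ((C / ∑ i ∈ Finset.range n, τ i : ℝ) : EReal) := by
  exact aux_jko_rate G hProper hConv hArgmin ε hε hεsum τ hτ J hJ μ hμ herr j hj
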